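/- Let p > 2, k > 0, and let a: ℝ → ℝ be smooth with (a, a_θ) never both zero, satisfying a_{θθ} = -Va with V as in the quasiradial ODE. Define q = (a_θ² + k²a²)^{(4-p)/2}(a_θ² + (p-1)k²a²)^{-1}. Then q'(θ) = B^{-2}A^{(2-p)/2}(2-p)·a·a_θ·D, where A = a_θ² + k²a², B = a_θ² + (p-1)k²a², and D = (3k² - V)a_θ² + ((p-1)k² - (p-3)V)k²a². -/

import Mathlib

/-- The potential `V` in the quasiradial ODE. -/
noncomputable def Vpot (p k x y : ℝ) : ℝ :=
  (((2*p-3)*k^2 - (p-2)*k)*y^2 + ((p-1)*k^2 - (p-2)*k)*k^2*x^2)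
    / ((p-1)*y^2 + k^2*x^2)

theorem stmt_18 (p k : ℝ) (hp : 2 < p) (hk : 0 < k) (a : ℝ → ℝ)
    (ha : ContDiff ℝ (⊤ : ℕ∞) a)
    (hne : ∀ θ, (a θ, deriv a θ) ≠ (0, 0))
    (hODE : ∀ θ, deriv (deriv a) θ = -(Vpot p k (a θ) (deriv a θ)) * a θ)
    (θ : ℝ) :
    deriv (fun s => ((deriv a s)^2 + k^2*(a s)^2) ^ ((4-p)/2)
        * ((deriv a s)^2 + (p-1)*k^2*(a s)^2)⁻¹) θ
    = (((deriv a θ)^2 + (p-1)*k^2*(a θ)^2) ^ 2)⁻¹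
        * ((deriv a θ)^2 + k^2*(a θ)^2) ^ ((2-p)/2)
        * (2-p) * a θ * deriv a θ
        * ((3*k^2 - Vpot p k (a θ) (deriv a θ)) * (deriv a θ)^2
          + ((p-1)*k^2 - (p-3)*Vpot p k (a θ) (deriv a θ)) * k^2 * (a θ)^2) := by
  set V := Vpot p k (a θ) (deriv a θ) with hV
  have ha' : ContDiff ℝ ((⊤ : ℕ∞)) a := ha.of_le (by simp)
  have h1 := contDiff_infty_iff_deriv.mp ha'
  have hda : Differentiable ℝ a := h1.1
  have hda' : Differentiable ℝ (deriv a) := (contDiff_infty_iff_deriv.mp h1.2).1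
  have hor : a θ ≠ 0 ∨ deriv a θ ≠ 0 := by
    by_contra h
    push_neg at h
    exact hne θ (by simp [h.1, h.2, Prod.ext_iff])
  have hA : 0 < (deriv a θ)^2 + k^2*(a θ)^2 := by
    rcases hor with h | h
    · have : 0 < k^2*(a θ)^2 := by positivity
      nlinarith [sq_nonneg (deriv a θ)]
    · have : 0 < (deriv a θ)^2 := by positivity
      nlinarith [sq_nonneg (k * a θ)]
  have hp1 : 0 < p - 1 := by linarith
  have hB : 0 < (deriv a θ)^2 + (p-1)*k^2*(a θ)^2 := by
    rcases hor with h | h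
    · have : 0 < (p-1)*(k^2*(a θ)^2) := by positivity
      nlinarith [sq_nonneg (deriv a θ)]
    · have : 0 < (deriv a θ)^2 := by positivity
      nlinarith [mul_nonneg (mul_nonneg hp1.le (sq_nonneg k)) (sq_nonneg (a θ))]
  have hd1 : HasDerivAt a (deriv a θ) θ := (hda θ).hasDerivAt
  have hd2 : HasDerivAt (deriv a) (-V * a θ) θ := by
    have := (hda' θ).hasDerivAt
    rwa [hODE θ, ← hV] at this
  have hAd : HasDerivAt (fun s => (deriv a s)^2 + k^2*(a s)^2)
      (2 * a θ * deriv a θ * (k^2 - V)) θ := by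
    have : HasDerivAt (fun s => (deriv a s)^2 + k^2*(a s)^2) _ θ :=
      (hd2.pow 2).add (((hd1.pow 2)).const_mul (k^2))
    convert this using 1
    push_cast
    ring
  have hBd : HasDerivAt (fun s => (deriv a s)^2 + (p-1)*k^2*(a s)^2)
      (2 * a θ * deriv a θ * ((p-1)*k^2 - V)) θ := by
    have : HasDerivAt (fun s => (deriv a s)^2 + (p-1)*k^2*(a s)^2) _ θ :=
      (hd2.pow 2).add (((hd1.pow 2)).const_mul ((p-1)*k^2))
    convert this using 1
    push_cast
    ring
  have hq := (hAd.rpow_const (p := (4-p)/2) (Or.inl hA.ne')).mul (hBd.inv hB.ne')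
  erw [hq.deriv]
  simp only [Pi.inv_apply]
  have hsplit : ((deriv a θ)^2 + k^2*(a θ)^2) ^ ((4-p)/2)
      = ((deriv a θ)^2 + k^2*(a θ)^2) * ((deriv a θ)^2 + k^2*(a θ)^2) ^ ((2-p)/2) := by
    rw [show (4-p)/2 = 1 + (2-p)/2 by ring, Real.rpow_add hA, Real.rpow_one]
  have hexp : (4-p)/2 - 1 = (2-p)/2 := by ring
  rw [hexp, hsplit]
  field_simp
  ring
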